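/- Let γ ∈ (0,1), τ > ν−1, λ > 0, m ≥ 0, s ≥ s₀, and let ω ∈ DC(2γ,τ). Let E(φ) = Σ_{ℓ∈ℤ^ν} Ê(ℓ) e^{iℓ·φ} be a φ-dependent family of linear operators with |E|_{−m,s+2τ+1} < ∞. Define X(φ) := − Σ_{ℓ∈ℤ^ν∖{0}} (iλ ω·ℓ)^{−1} Ê(ℓ) e^{iℓ·φ}. Then X solves the homological equation λ ω·∂_φ X(φ) + E(φ) = Ê(0) and satisfies |X|_{−m,s} ≤ C(s) λ^{−1} γ^{−1} |E|_{−m,s+2τ+1}. Moreover, if E is momentum preserving (Ê(ℓ)_j^{j'} ≠ 0 ⟹ π^⊤(ℓ)+j−j' = 0), then X is momentum preserving and Ê(0) is a diagonal operator: Ê(0)_j^{j'} = 0 for j ≠ j'. -/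

import Mathlib

/-! For `ℓ ≠ 0` the Diophantine condition bounds the small divisor `|λ ω·ℓ|` below by
`2λγ⟨ℓ⟩^{-τ}`, so `|X̂(ℓ)_j^{j'}| ≤ (2λγ)⁻¹ ⟨ℓ⟩^τ |Ê(ℓ)_j^{j'}|`. Since `⟨ℓ⟩ ≤ ⟨ℓ, j - j'⟩`, the
factor `⟨ℓ⟩^τ` is absorbed by `τ` extra weights in the decay norm. `X` vanishes wherever `E`
does, so it inherits momentum preservation, which for `ℓ = 0` reads `j = j'`. -/

open scoped ENNReal NNReal BigOperators Classical
open MeasureTheory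

namespace BetaPlane

abbrev Zn (n : ℕ) := Fin n → ℤ
abbrev Z2 := Fin 2 → ℤ
abbrev Idx (ν : ℕ) := Zn ν × Z2

/-- Euclidean norm of an integer vector. -/
noncomputable def znorm {n : ℕ} (ℓ : Fin n → ℤ) : ℝ :=
  Real.sqrt (∑ i, ((ℓ i : ℝ)) ^ 2)

/-- Euclidean norm of a real vector. -/
noncomputable def rnorm {n : ℕ} (ω : Fin n → ℝ) : ℝ :=
  Real.sqrt (∑ i, (ω i) ^ 2)

/-- `⟨ℓ,j⟩ := max {1, |ℓ|, |j|}`. -/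
noncomputable def wt {ν : ℕ} (p : Idx ν) : ℝ := max 1 (max (znorm p.1) (znorm p.2))

/-- `⟨ℓ⟩ := max {1, |ℓ|}`. -/
noncomputable def bwt {n : ℕ} (ℓ : Fin n → ℤ) : ℝ := max 1 (znorm ℓ)

noncomputable def ωdot {n : ℕ} (ω : Fin n → ℝ) (ℓ : Fin n → ℤ) : ℝ := ∑ i, ω i * (ℓ i : ℝ)

noncomputable def mdot (m : Fin 2 → ℝ) (j : Z2) : ℝ := ∑ k, m k * (j k : ℝ)

/-- `π^⊤(ℓ) = ∑ k, ℓ k • j̄ k`. -/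
def piT {ν : ℕ} (jb : Fin ν → Z2) (ℓ : Zn ν) : Z2 := fun k => ∑ i, ℓ i * jb i k

/-- `π(ς) = (j̄ 1 · ς, …, j̄ ν · ς)`. -/
noncomputable def piMap {ν : ℕ} (jb : Fin ν → Z2) (ς : Fin 2 → ℝ) : Fin ν → ℝ :=
  fun i => ∑ k, (jb i k : ℝ) * ς k

/-- The wave vectors `j̄ 1, …, j̄ ν` span `ℝ²`. -/
def SpanningWaveVectors {ν : ℕ} (jb : Fin ν → Z2) : Prop :=
  ∃ i i' : Fin ν, jb i 0 * jb i' 1 - jb i 1 * jb i' 0 ≠ 0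

/-- Quasi-periodic traveling wave, in Fourier coefficients:
`û(ℓ,j) = 0` whenever `π^⊤(ℓ) + j ≠ 0`. -/
def IsQPTW {ν : ℕ} (jb : Fin ν → Z2) (u : Idx ν → ℂ) : Prop :=
  ∀ p : Idx ν, piT jb p.1 + p.2 ≠ 0 → u p = 0

/-- Zero average in `x`: the Fourier coefficients `û(ℓ,0)` vanish. -/
def ZeroAvgX {ν : ℕ} (u : Idx ν → ℂ) : Prop := ∀ ℓ : Zn ν, u (ℓ, 0) = 0

/-- Real-valuedness in Fourier coefficients. -/
def RealCoeff {ν : ℕ} (u : Idx ν → ℂ) : Prop :=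
  ∀ p : Idx ν, u (-p.1, -p.2) = starRingEnd ℂ (u p)

/-- Sobolev norm `‖u‖_s` (as an extended real). -/
noncomputable def sobNorm {ν : ℕ} {E : Type*} [SeminormedAddCommGroup E]
    (s : ℝ) (u : Idx ν → E) : ℝ≥0∞ :=
  (∑' p : Idx ν, ENNReal.ofReal (wt p ^ (2 * s)) * ((‖u p‖₊ : ℝ≥0∞)) ^ 2) ^ (1/2 : ℝ)

/-- `C^∞` smoothness = rapid decay of the Fourier coefficients. -/
def SmoothCoeff {ν : ℕ} (u : Idx ν → ℂ) : Prop := ∀ s : ℝ, sobNorm s u < ⊤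

/-- Weighted (Lipschitz in the parameter `ω ∈ Λ`) Sobolev norm `‖u‖_s^{Lip(γ)}`. -/
noncomputable def sobNormLip {ν : ℕ} {E : Type*} [SeminormedAddCommGroup E]
    (γ : ℝ) (Λ : Set (Fin ν → ℝ)) (s : ℝ) (u : (Fin ν → ℝ) → Idx ν → E) : ℝ≥0∞ :=
  (⨆ ω ∈ Λ, sobNorm s (u ω)) +
    ENNReal.ofReal γ * ⨆ ω₁ ∈ Λ, ⨆ ω₂ ∈ Λ,
      sobNorm (s - 1) (fun p => u ω₁ p - u ω₂ p) / ENNReal.ofReal (rnorm (ω₁ - ω₂))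

/-- Symbol of `𝙻 = (−Δ)^{−1} ∂_{x₁}`. -/
noncomputable def Lfreq (j : Z2) : ℝ := if j = 0 then 0 else (j 0 : ℝ) / (znorm j) ^ 2

/-- The operator `𝙻 = (−Δ)^{−1} ∂_{x₁}` in Fourier coefficients. -/
noncomputable def Lsymb {ν : ℕ} (v : Idx ν → ℂ) : Idx ν → ℂ :=
  fun p => Complex.I * (Lfreq p.2 : ℂ) * v p

/-- The operator `ω·∂_φ` in Fourier coefficients. -/
noncomputable def phiDer {ν : ℕ} (ω : Fin ν → ℝ) (v : Idx ν → ℂ) : Idx ν → ℂ :=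
  fun p => Complex.I * ((ωdot ω p.1 : ℝ) : ℂ) * v p

/-- `B(j') ⋅ (i j'')` where `B(j') = (i/|j'|²)(−j'₂, j'₁)` is the Biot-Savart symbol. -/
noncomputable def bsDot (j' j'' : Z2) : ℂ :=
  if j' = 0 then 0
  else -((((-(j' 1 : ℝ)) * (j'' 0 : ℝ) + (j' 0 : ℝ) * (j'' 1 : ℝ)) / (znorm j') ^ 2 : ℝ) : ℂ)

/-- Fourier coefficients of the nonlinearity `B[v]·∇w` (`B` the Biot-Savart operator). -/
noncomputable def nonlin {ν : ℕ} (v w : Idx ν → ℂ) : Idx ν → ℂ :=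
  fun p => ∑' q : Idx ν, bsDot q.2 (p.2 - q.2) * v q * w (p.1 - q.1, p.2 - q.2)

/-- Fourier coefficients of the (vector valued) Biot-Savart velocity field `B[v]`. -/
noncomputable def biotSavartV {ν : ℕ} (v : Idx ν → ℂ) : Idx ν → Fin 2 → ℂ :=
  fun p k => if p.2 = 0 then 0 else
    Complex.I * ((((if k = 0 then -(p.2 1) else p.2 0 : ℤ) : ℝ) / (znorm p.2) ^ 2 : ℝ) : ℂ) * v p

/-- The reference annulus `Ω := {1 ≤ |ω| ≤ 2}`. -/
def OmegaSet (ν : ℕ) : Set (Fin ν → ℝ) := {ω | 1 ≤ rnorm ω ∧ rnorm ω ≤ 2}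

/-- Diophantine vectors `DC(γ,τ)`. -/
def DCset (ν : ℕ) (γ τ : ℝ) : Set (Fin ν → ℝ) :=
  {ω ∈ OmegaSet ν | ∀ ℓ : Zn ν, ℓ ≠ 0 → γ * bwt ℓ ^ (-τ) ≤ |ωdot ω ℓ|}

/-- The set `Ω_γ` of first order Melnikov non-resonance conditions. -/
def MelnikovSet {ν : ℕ} (jb : Fin ν → Z2) (β lam γ τ : ℝ) : Set (Fin ν → ℝ) :=
  {ω ∈ DCset ν γ τ | ∀ (ℓ : Zn ν) (j : Z2), (ℓ, j) ≠ (0, 0) → piT jb ℓ + j = 0 →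
    lam * γ * bwt ℓ ^ (-τ) ≤ |lam * ωdot ω ℓ + β * Lfreq j|}

/-- Matrix representation `R̂(ℓ)_j^{j'}` of (φ-dependent families of) linear operators. -/
abbrev OpMat (ν : ℕ) := Zn ν → Z2 → Z2 → ℂ

/-- The decay norm `|R|_{m,s}`. -/
noncomputable def decayNorm {ν : ℕ} (m s : ℝ) (R : OpMat ν) : ℝ≥0∞ :=
  ⨆ j' : Z2, ENNReal.ofReal (bwt j' ^ (-m)) *
    (∑' q : Idx ν, ENNReal.ofReal (wt (q.1, q.2 - j') ^ (2 * s)) *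
      ((‖R q.1 q.2 j'‖₊ : ℝ≥0∞)) ^ 2) ^ (1/2 : ℝ)

/-- The weighted decay norm `|R|_{m,s}^{Lip(γ)}` of a family `R(ω)`, `ω ∈ Λ`. -/
noncomputable def decayNormLip {ν : ℕ} (γ : ℝ) (Λ : Set (Fin ν → ℝ)) (m s : ℝ)
    (R : (Fin ν → ℝ) → OpMat ν) : ℝ≥0∞ :=
  (⨆ ω ∈ Λ, decayNorm m s (R ω)) +
    ENNReal.ofReal γ * ⨆ ω₁ ∈ Λ, ⨆ ω₂ ∈ Λ,
      decayNorm m (s - 1) (fun ℓ j j' => R ω₁ ℓ j j' - R ω₂ ℓ j j') /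
        ENNReal.ofReal (rnorm (ω₁ - ω₂))

/-- Composition of operators at the level of matrices. -/
noncomputable def opComp {ν : ℕ} (R Q : OpMat ν) : OpMat ν :=
  fun ℓ j j' => ∑' q : Idx ν, R (ℓ - q.1) j q.2 * Q q.1 q.2 j'

/-- Action of an operator (given by its matrix) on Fourier coefficients. -/
noncomputable def opApply {ν : ℕ} (R : OpMat ν) (u : Idx ν → ℂ) : Idx ν → ℂ :=
  fun p => ∑' q : Idx ν, R (p.1 - q.1) p.2 q.2 * u q

/-- Matrix of the identity operator. -/
noncomputable def idMat (ν : ℕ) : OpMat ν := fun ℓ j j' => if ℓ = 0 ∧ j = j' then 1 else 0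

/-- Momentum preserving operator, in matrix form. -/
def MomPresMat {ν : ℕ} (jb : Fin ν → Z2) (R : OpMat ν) : Prop :=
  ∀ ℓ j j', R ℓ j j' ≠ 0 → piT jb ℓ + j = j'

/-- `n`-fold composition `R^n`. -/
noncomputable def opPow {ν : ℕ} (R : OpMat ν) : ℕ → OpMat ν
  | 0 => idMat ν
  | n + 1 => opComp R (opPow R n)

/-- Exponential `exp(R) = Id + ∑_{n ≥ 1} R^n / n!`. -/
noncomputable def expMat {ν : ℕ} (R : OpMat ν) : OpMat ν :=
  fun ℓ j j' => idMat ν ℓ j j' +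
    ∑' n : ℕ, ((Nat.factorial (n + 1) : ℂ))⁻¹ * opPow R (n + 1) ℓ j j'


/-- Solution `X(φ) = − ∑_{ℓ ≠ 0} (iλ ω·ℓ)⁻¹ Ê(ℓ) e^{iℓ·φ}` of the homological equation
`λ ω·∂_φ X + E = Ê(0)`. -/
noncomputable def homSolX {ν : ℕ} (lam : ℝ) (ω : Fin ν → ℝ) (E : OpMat ν) : OpMat ν :=
  fun ℓ j j' => if ℓ = 0 then 0
    else - E ℓ j j' / (Complex.I * (((lam * ωdot ω ℓ : ℝ)) : ℂ))

lemma one_le_bwt {n : ℕ} (ℓ : Fin n → ℤ) : 1 ≤ bwt ℓ := le_max_left _ _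

lemma one_le_wt {ν : ℕ} (p : Idx ν) : 1 ≤ wt p := le_max_left _ _

lemma bwt_fst_le_wt {ν : ℕ} (p : Idx ν) : bwt p.1 ≤ wt p :=
  max_le_max le_rfl (le_max_left _ _)

lemma piT_zero {ν : ℕ} (jb : Fin ν → Z2) : piT jb 0 = 0 := by
  funext k
  simp [piT]

section DecayNorm

variable {ν : ℕ}

lemma decayNorm_le_mul_of_forall_le {m s s' : ℝ} {X E : OpMat ν} (c : ℝ≥0∞)
    (h : ∀ (j' : Z2) (q : Idx ν),
      ENNReal.ofReal (wt (q.1, q.2 - j') ^ (2 * s)) * (‖X q.1 q.2 j'‖₊ : ℝ≥0∞) ^ 2 ≤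
        c ^ 2 * (ENNReal.ofReal (wt (q.1, q.2 - j') ^ (2 * s')) *
          (‖E q.1 q.2 j'‖₊ : ℝ≥0∞) ^ 2)) :
    decayNorm m s X ≤ c * decayNorm m s' E := by
  rw [decayNorm, decayNorm, ENNReal.mul_iSup]
  refine iSup_mono fun j' => ?_
  have hsum := ENNReal.tsum_mul_left (a := c ^ 2) ▸ ENNReal.tsum_le_tsum (h j')
  have hsqrt : ((c ^ 2) ^ (1 / 2 : ℝ)) = c := by
    simpa using ENNReal.pow_rpow_inv_natCast (n := 2) two_ne_zero c
  calc _ ≤ ENNReal.ofReal (bwt j' ^ (-m)) * (c ^ 2 * _) ^ (1 / 2 : ℝ) :=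
        mul_le_mul_right (ENNReal.rpow_le_rpow hsum (by norm_num)) _
    _ = _ := by
        rw [ENNReal.mul_rpow_of_nonneg _ _ (by norm_num), hsqrt, mul_left_comm]

lemma decayNorm_le_of_norm_le {m s s' τ c : ℝ} {X E : OpMat ν} (hc : 0 ≤ c) (hτ : 0 ≤ τ)
    (hs : s + τ ≤ s') (h : ∀ ℓ j j', ‖X ℓ j j'‖ ≤ c * bwt ℓ ^ τ * ‖E ℓ j j'‖) :
    decayNorm m s X ≤ ENNReal.ofReal c * decayNorm m s' E := by
  refine decayNorm_le_mul_of_forall_le _ fun j' q => ?_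
  set w := wt (q.1, q.2 - j')
  have hw : 1 ≤ w := one_le_wt _
  have hb : 0 ≤ bwt q.1 := zero_le_one.trans (one_le_bwt _)
  have hweight : w ^ (2 * s) * (bwt q.1 ^ τ) ^ 2 ≤ w ^ (2 * s') := by
    calc w ^ (2 * s) * (bwt q.1 ^ τ) ^ 2 ≤ w ^ (2 * s) * (w ^ τ) ^ 2 := by
          gcongr
          exact bwt_fst_le_wt (q.1, q.2 - j')
      _ = w ^ (2 * (s + τ)) := by
          rw [← Real.rpow_natCast, ← Real.rpow_mul (by linarith), ← Real.rpow_add (by linarith)]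
          ring_nf
      _ ≤ w ^ (2 * s') := Real.rpow_le_rpow_of_exponent_le hw (by linarith)
  rw [← enorm_eq_nnnorm, ← enorm_eq_nnnorm, ← ofReal_norm, ← ofReal_norm,
    ← ENNReal.ofReal_pow (norm_nonneg _), ← ENNReal.ofReal_pow (norm_nonneg _),
    ← ENNReal.ofReal_pow hc, ← ENNReal.ofReal_mul (by positivity),
    ← ENNReal.ofReal_mul (by positivity), ← ENNReal.ofReal_mul (by positivity)]
  refine ENNReal.ofReal_le_ofReal ?_
  calc w ^ (2 * s) * ‖X q.1 q.2 j'‖ ^ 2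
      ≤ w ^ (2 * s) * (c * bwt q.1 ^ τ * ‖E q.1 q.2 j'‖) ^ 2 := by
        gcongr
        exact h _ _ _
    _ = c ^ 2 * (w ^ (2 * s) * (bwt q.1 ^ τ) ^ 2 * ‖E q.1 q.2 j'‖ ^ 2) := by ring
    _ ≤ c ^ 2 * (w ^ (2 * s') * ‖E q.1 q.2 j'‖ ^ 2) := by gcongr

end DecayNorm

section HomologicalEquation

variable {ν : ℕ} {γ τ lam : ℝ} {ω : Fin ν → ℝ} {ℓ : Zn ν}

lemma ωdot_ne_zero_of_mem_DCset (hγ : 0 < γ) (hω : ω ∈ DCset ν γ τ) (hℓ : ℓ ≠ 0) :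
    ωdot ω ℓ ≠ 0 := by
  have hpos : 0 < γ * bwt ℓ ^ (-τ) :=
    mul_pos hγ (Real.rpow_pos_of_pos (zero_lt_one.trans_le (one_le_bwt ℓ)) _)
  exact abs_pos.mp (hpos.trans_le (hω.2 ℓ hℓ))

lemma homSolX_homological_eq (hlam : lam ≠ 0) (hω : ∀ ℓ : Zn ν, ℓ ≠ 0 → ωdot ω ℓ ≠ 0)
    (E : OpMat ν) (ℓ : Zn ν) (j j' : Z2) :
    Complex.I * ((lam * ωdot ω ℓ : ℝ) : ℂ) * homSolX lam ω E ℓ j j' + E ℓ j j'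
      = if ℓ = 0 then E 0 j j' else 0 := by
  by_cases hℓ : ℓ = 0
  · subst hℓ
    simp [homSolX]
  · have hden : Complex.I * ((lam * ωdot ω ℓ : ℝ) : ℂ) ≠ 0 :=
      mul_ne_zero Complex.I_ne_zero (Complex.ofReal_ne_zero.mpr (mul_ne_zero hlam (hω ℓ hℓ)))
    rw [homSolX, if_neg hℓ, if_neg hℓ, neg_div, mul_neg, mul_div_cancel₀ _ hden,
      neg_add_cancel]

lemma norm_homSolX_le (hlam : 0 < lam) (hγ : 0 < γ) (hω : ω ∈ DCset ν γ τ)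
    (E : OpMat ν) (ℓ : Zn ν) (j j' : Z2) :
    ‖homSolX lam ω E ℓ j j'‖ ≤ (lam * γ)⁻¹ * bwt ℓ ^ τ * ‖E ℓ j j'‖ := by
  have hb : 0 < bwt ℓ := zero_lt_one.trans_le (one_le_bwt ℓ)
  by_cases hℓ : ℓ = 0
  · simp only [homSolX, if_pos hℓ, norm_zero]
    positivity
  have hdiv : lam * (γ * bwt ℓ ^ (-τ)) ≤ ‖Complex.I * ((lam * ωdot ω ℓ : ℝ) : ℂ)‖ := by
    rw [norm_mul, Complex.norm_I, one_mul, Complex.norm_real, Real.norm_eq_abs, abs_mul,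
      abs_of_pos hlam]
    exact mul_le_mul_of_nonneg_left (hω.2 ℓ hℓ) hlam.le
  calc ‖homSolX lam ω E ℓ j j'‖ ≤ ‖E ℓ j j'‖ / (lam * (γ * bwt ℓ ^ (-τ))) := by
        rw [homSolX, if_neg hℓ, norm_div, norm_neg]
        exact div_le_div_of_nonneg_left (norm_nonneg _) (by positivity) hdiv
    _ = (lam * γ)⁻¹ * bwt ℓ ^ τ * ‖E ℓ j j'‖ := by
        rw [Real.rpow_neg hb.le]
        field_simp

end HomologicalEquation

namespace MomPresMat

variable {ν : ℕ} {jb : Fin ν → Z2} {E : OpMat ν}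

lemma homSolX (hE : MomPresMat jb E) (lam : ℝ) (ω : Fin ν → ℝ) :
    MomPresMat jb (homSolX lam ω E) := by
  intro ℓ j j' hX
  refine hE ℓ j j' fun hE0 => hX ?_
  simp [BetaPlane.homSolX, hE0]

lemma apply_zero_of_ne (hE : MomPresMat jb E) {j j' : Z2} (hjj : j ≠ j') : E 0 j j' = 0 := by
  by_contra hne
  exact hjj (by simpa [piT_zero] using hE 0 j j' hne)

end MomPresMat

theorem operator_homological_equation_general
    {ν : ℕ} (hν : 2 ≤ ν) (jb : Fin ν → Z2)
    (γ τ lam m s : ℝ)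
    (hγ₀ : 0 < γ) (hτ : (ν : ℝ) - 1 < τ) (hlam : 0 < lam)
    (ω : Fin ν → ℝ) (hω : ω ∈ DCset ν (2 * γ) τ)
    (E : OpMat ν) :
    ∃ C : ℝ, 0 < C ∧
      -- homological equation `λ ω·∂_φ X + E = Ê(0)`
      (∀ (ℓ : Zn ν) (j j' : Z2),
        Complex.I * (((lam * ωdot ω ℓ : ℝ)) : ℂ) * homSolX lam ω E ℓ j j' + E ℓ j j'
          = (if ℓ = 0 then E 0 j j' else 0)) ∧
      -- estimate
      decayNorm (-m) s (homSolX lam ω E)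
        ≤ ENNReal.ofReal (C * lam⁻¹ * γ⁻¹) * decayNorm (-m) (s + 2 * τ + 1) E ∧
      -- momentum preservation and diagonality of the φ-average
      (MomPresMat jb E →
        MomPresMat jb (homSolX lam ω E) ∧ ∀ j j' : Z2, j ≠ j' → E 0 j j' = 0) := by
  have hτ₀ : 0 ≤ τ := by
    have : (2 : ℝ) ≤ ν := by exact_mod_cast hν
    linarith
  have h2γ : 0 < 2 * γ := by positivity
  have hestimate := decayNorm_le_of_norm_le (m := -m) (s' := s + 2 * τ + 1) (by positivity) hτ₀
    (by linarith) (norm_homSolX_le hlam h2γ hω E)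
  refine ⟨2⁻¹, by norm_num,
    homSolX_homological_eq hlam.ne' (fun ℓ hℓ => ωdot_ne_zero_of_mem_DCset h2γ hω hℓ) E,
    ?_, fun hE => ⟨hE.homSolX lam ω, fun j j' => hE.apply_zero_of_ne⟩⟩
  convert hestimate using 3
  field_simp

/-- homological equation of Lemma 5.4 of the paper: for Diophantine
`ω`, the operator `X` solves `λ ω·∂_φ X(φ) + E(φ) = Ê(0)` with the estimate
`|X|_{-m,s} ≤ C(s) λ⁻¹ γ⁻¹ |E|_{-m,s+2τ+1}`; moreover if `E` is momentum preserving then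
so is `X`, and `Ê(0)` is a diagonal operator. -/
theorem operator_homological_equation
    {ν : ℕ} (hν : 2 ≤ ν) (jb : Fin ν → Z2) (hjb : SpanningWaveVectors jb)
    (γ τ lam m s : ℝ)
    (hγ₀ : 0 < γ) (hγ₁ : γ < 1) (hτ : (ν : ℝ) - 1 < τ) (hlam : 0 < lam)
    (hm : 0 ≤ m) (hs : (ν : ℝ) + 5 ≤ s)
    (ω : Fin ν → ℝ) (hω : ω ∈ DCset ν (2 * γ) τ)
    (E : OpMat ν) (hE : decayNorm (-m) (s + 2 * τ + 1) E < ⊤) :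
    ∃ C : ℝ, 0 < C ∧
      -- homological equation `λ ω·∂_φ X + E = Ê(0)`
      (∀ (ℓ : Zn ν) (j j' : Z2),
        Complex.I * (((lam * ωdot ω ℓ : ℝ)) : ℂ) * homSolX lam ω E ℓ j j' + E ℓ j j'
          = (if ℓ = 0 then E 0 j j' else 0)) ∧
      -- estimate
      decayNorm (-m) s (homSolX lam ω E)
        ≤ ENNReal.ofReal (C * lam⁻¹ * γ⁻¹) * decayNorm (-m) (s + 2 * τ + 1) E ∧
      -- momentum preservation and diagonality of the φ-average
      (MomPresMat jb E →
        MomPresMat jb (homSolX lam ω E) ∧ ∀ j j' : Z2, j ≠ j' → E 0 j j' = 0) :=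
  operator_homological_equation_general hν jb γ τ lam m s hγ₀ hτ hlam ω hω E

end BetaPlane
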